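/- arXiv:2109.00353 — 5 statements merged into one kernel-verified Lean document; each statement's English description precedes it below -/
import Mathlib

section
/- Let (X₁, μ₁) and (X₂, μ₂) be measure spaces, g₁ : X₁ → [0,∞] and g₂ : X₂ → [0,∞] measurable functions, and r₀ > 0. If μ₁({g₁ ≥ r⁻¹}) ≥ μ₂({g₂ ≥ r⁻¹}) for all r ∈ (0, r₀], then ∫_{{g₁ ≥ r₀⁻¹}} g₁ dμ₁ ≥ ∫_{{g₂ ≥ r₀⁻¹}} g₂ dμ₂. -/
open MeasureTheory Set ENNReal

/-- Layer-cake formula for `ℝ≥0∞`-valued functions, with respect to an arbitrary measure. -/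
lemma layercake_ennreal {α : Type*} [MeasurableSpace α] (μ : Measure α)
    (f : α → ENNReal) (hf : Measurable f) :
    ∫⁻ x, f x ∂μ = ∫⁻ t in Set.Ioi (0 : ℝ), μ {x | ENNReal.ofReal t ≤ f x} := by
  by_cases htop : μ {x | f x = ∞} = 0
  · have hae : ∀ᵐ x ∂μ, f x ≠ ∞ := by
      rw [ae_iff]
      simpa using htop
    have heq : f =ᵐ[μ] fun x => ENNReal.ofReal (f x).toReal := by
      filter_upwards [hae] with x hx
      simp [ENNReal.ofReal_toReal hx]
    rw [lintegral_congr_ae heq,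
      lintegral_eq_lintegral_meas_le μ (Filter.Eventually.of_forall fun x => ENNReal.toReal_nonneg)
        (hf.ennreal_toReal).aemeasurable]
    refine setLIntegral_congr_fun measurableSet_Ioi (fun t ht => ?_)
    refine measure_congr ?_
    have : {a | t ≤ (f a).toReal} =ᵐ[μ] {x | ENNReal.ofReal t ≤ f x} := by
      rw [Filter.eventuallyEq_set]
      filter_upwards [hae] with x hx
      exact Iff.symm (ENNReal.ofReal_le_iff_le_toReal hx)
    exact this
  · have hS : MeasurableSet {x | f x = ∞} := hf (measurableSet_singleton ∞)
    have hlhs : ∫⁻ x, f x ∂μ = ∞ := by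
      refine top_unique ?_
      calc (∞ : ENNReal) = ∞ * μ {x | f x = ∞} := by
            rw [ENNReal.top_mul htop]
        _ = ∫⁻ _ in {x | f x = ∞}, ∞ ∂μ := by rw [setLIntegral_const, mul_comm]
        _ = ∫⁻ x in {x | f x = ∞}, f x ∂μ := by
            refine setLIntegral_congr_fun hS (fun x hx => (show f x = ∞ from hx).symm)
        _ ≤ ∫⁻ x, f x ∂μ := setLIntegral_le_lintegral _ _
    have hrhs : ∫⁻ t in Set.Ioi (0 : ℝ), μ {x | ENNReal.ofReal t ≤ f x} = ∞ := by
      refine top_unique ?_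
      calc (∞ : ENNReal) = μ {x | f x = ∞} * volume (Set.Ioi (0 : ℝ)) := by
            rw [Real.volume_Ioi, ENNReal.mul_top htop]
        _ = ∫⁻ _ in Set.Ioi (0 : ℝ), μ {x | f x = ∞} := (setLIntegral_const _ _).symm
        _ ≤ ∫⁻ t in Set.Ioi (0 : ℝ), μ {x | ENNReal.ofReal t ≤ f x} := by
            refine lintegral_mono fun t => measure_mono fun x hx => ?_
            simp only [Set.mem_setOf_eq] at hx ⊢
            simp [hx]
    rw [hlhs, hrhs]

lemma indicator_superlevel {X : Type*} (g : X → ENNReal) (c : ENNReal) (t : ℝ) (ht : 0 < t) :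
    {x | ENNReal.ofReal t ≤ ({x | c ≤ g x}).indicator g x}
      = {x | ENNReal.ofReal t ⊔ c ≤ g x} := by
  ext x
  simp only [Set.mem_setOf_eq, Set.indicator_apply, sup_le_iff]
  by_cases hx : c ≤ g x
  · simp [hx]
  · simp only [if_neg hx, hx, and_false, iff_false, le_zero_iff, ENNReal.ofReal_eq_zero, not_le]
    simpa [ENNReal.ofReal_pos] using ht

theorem stmt0 {X₁ X₂ : Type*} [MeasurableSpace X₁] [MeasurableSpace X₂]
    (μ₁ : Measure X₁) (μ₂ : Measure X₂)
    (g₁ : X₁ → ENNReal) (g₂ : X₂ → ENNReal)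
    (hg₁ : Measurable g₁) (hg₂ : Measurable g₂)
    (r₀ : ℝ) (hr₀ : 0 < r₀)
    (h : ∀ r : ℝ, r ∈ Set.Ioc 0 r₀ →
      μ₂ {x | (ENNReal.ofReal r)⁻¹ ≤ g₂ x} ≤ μ₁ {x | (ENNReal.ofReal r)⁻¹ ≤ g₁ x}) :
    ∫⁻ x in {x | (ENNReal.ofReal r₀)⁻¹ ≤ g₂ x}, g₂ x ∂μ₂ ≤
      ∫⁻ x in {x | (ENNReal.ofReal r₀)⁻¹ ≤ g₁ x}, g₁ x ∂μ₁ := by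
  set c : ENNReal := (ENNReal.ofReal r₀)⁻¹ with hc
  have hR0 : ENNReal.ofReal r₀ ≠ 0 := by
    simp [ENNReal.ofReal_eq_zero, not_le, hr₀]
  have hc0 : c ≠ 0 := by simp [hc, ENNReal.inv_ne_zero]
  have hct : c ≠ ∞ := by simp [hc, hR0]
  -- the key superlevel-set comparison for all finite levels `s ≥ c`
  have key : ∀ s : ENNReal, c ≤ s → s ≠ ∞ →
      μ₂ {x | s ≤ g₂ x} ≤ μ₁ {x | s ≤ g₁ x} := by
    intro s hcs hst
    have hs0 : s ≠ 0 := fun h0 => hc0 (le_antisymm (h0 ▸ hcs) zero_le)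
    set r : ℝ := (s⁻¹).toReal with hr
    have hsit : s⁻¹ ≠ ∞ := by simp [hs0]
    have hsinv0 : s⁻¹ ≠ 0 := by simp [hst]
    have hrpos : 0 < r := ENNReal.toReal_pos hsinv0 hsit
    have hrle : r ≤ r₀ := by
      have : s⁻¹ ≤ ENNReal.ofReal r₀ := by
        rw [← inv_inv (ENNReal.ofReal r₀)]
        exact ENNReal.inv_le_inv.mpr hcs
      calc r = (s⁻¹).toReal := rfl
        _ ≤ (ENNReal.ofReal r₀).toReal := ENNReal.toReal_mono (by simp) this
        _ = r₀ := ENNReal.toReal_ofReal hr₀.le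
    have hofr : (ENNReal.ofReal r)⁻¹ = s := by
      rw [hr, ENNReal.ofReal_toReal hsit, inv_inv]
    have := h r ⟨hrpos, hrle⟩
    rwa [hofr] at this
  -- rewrite as integrals of indicators
  have hS₁ : MeasurableSet {x | c ≤ g₁ x} := hg₁ measurableSet_Ici
  have hS₂ : MeasurableSet {x | c ≤ g₂ x} := hg₂ measurableSet_Ici
  rw [← lintegral_indicator hS₂, ← lintegral_indicator hS₁,
    layercake_ennreal μ₂ _ (hg₂.indicator hS₂), layercake_ennreal μ₁ _ (hg₁.indicator hS₁)]
  refine lintegral_mono_ae ?_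
  filter_upwards [ae_restrict_mem measurableSet_Ioi] with t (ht : 0 < t)
  have hsup : ENNReal.ofReal t ⊔ c ≠ ⊤ := by
    simp [hct, ENNReal.ofReal_ne_top]
  calc μ₂ {x | ENNReal.ofReal t ≤ ({x | c ≤ g₂ x}).indicator g₂ x}
      = μ₂ {x | ENNReal.ofReal t ⊔ c ≤ g₂ x} := congrArg μ₂ (indicator_superlevel g₂ c t ht)
    _ ≤ μ₁ {x | ENNReal.ofReal t ⊔ c ≤ g₁ x} := key _ le_sup_right hsup
    _ = μ₁ {x | ENNReal.ofReal t ≤ ({x | c ≤ g₁ x}).indicator g₁ x} := (congrArg μ₁ (indicator_superlevel g₁ c t ht)).symm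
end

section
/- Let a : ℝ → (0,∞) be a measurable function such that t ↦ a(t)eᵗ is increasing on some interval (T₀, ∞) and ∫_N^∞ a(t) dt = +∞ for every N. Then there exists a positive measurable function ã : ℝ → (0,∞) and T < ∞ such that: (1) ã(t) ≤ a(t) for all t > T; (2) t ↦ ã(t)eᵗ is strictly increasing and continuous on (T, ∞); (3) ∫_N^∞ ã(t) dt = +∞ for every N. -/
open MeasureTheory Set Real

theorem stmt2 (a : ℝ → ℝ) (ha_pos : ∀ t, 0 < a t) (ha_meas : Measurable a)
    (T₀ : ℝ) (ha_mono : MonotoneOn (fun t => a t * Real.exp t) (Set.Ioi T₀))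
    (ha_int : ∀ N : ℝ, ∫⁻ t in Set.Ioi N, ENNReal.ofReal (a t) = ⊤) :
    ∃ (a' : ℝ → ℝ) (T : ℝ), Measurable a' ∧ (∀ t, 0 < a' t) ∧
      (∀ t, T < t → a' t ≤ a t) ∧
      StrictMonoOn (fun t => a' t * Real.exp t) (Set.Ioi T) ∧
      ContinuousOn (fun t => a' t * Real.exp t) (Set.Ioi T) ∧
      (∀ N : ℝ, ∫⁻ t in Set.Ioi N, ENNReal.ofReal (a' t) = ⊤) := by
  set K : ℝ := T₀ + 1 with hK
  set T : ℝ := T₀ + 2 with hT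
  set g' : ℝ → ℝ := fun s => a (max s K) * Real.exp (max s K) with hg'
  have hKmem : ∀ s : ℝ, max s K ∈ Set.Ioi T₀ := fun s =>
    lt_of_lt_of_le (by simp [hK]) (le_max_right s K)
  have hg'mono : Monotone g' := fun s t hst =>
    ha_mono (hKmem s) (hKmem t) (max_le_max hst le_rfl)
  have hg'pos : ∀ s, 0 < g' s := fun s => mul_pos (ha_pos _) (Real.exp_pos _)
  set c : ℝ := g' K / 2 with hc
  have hc_pos : 0 < c := by
    have := hg'pos K
    simp only [hc]; linarith
  have h2c : ∀ s, 2 * c ≤ g' s := by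
    intro s
    have h1 : g' K ≤ g' (max s K) := hg'mono (le_max_right s K)
    have h2 : g' (max s K) = g' s := by
      simp only [hg']
      rw [max_assoc, max_self]
    simp only [hc]
    linarith
  have hg'int : ∀ x y : ℝ, IntervalIntegrable g' MeasureTheory.volume x y := fun x y =>
    hg'mono.intervalIntegrable
  set F : ℝ → ℝ := fun t => ∫ s in (0:ℝ)..t, g' s with hF
  have hFcont : Continuous F := intervalIntegral.continuous_primitive hg'int 0
  set H : ℝ → ℝ := fun t => F t - F (t - 1) with hH
  have hHcont : Continuous H := hFcont.sub (hFcont.comp (continuous_id.sub continuous_const))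
  have hHval : ∀ t : ℝ, H t = ∫ s in (t-1)..t, g' s := fun t =>
    intervalIntegral.integral_interval_sub_left (hg'int 0 t) (hg'int 0 (t-1))
  have hHrep : ∀ t : ℝ, H t = ∫ x in (0:ℝ)..1, g' (x + (t - 1)) := by
    intro t
    rw [hHval t, intervalIntegral.integral_comp_add_right]
    norm_num
  have hint' : ∀ d : ℝ, IntervalIntegrable (fun x => g' (x + d)) MeasureTheory.volume 0 1 := by
    intro d
    have hm : Monotone fun x => g' (x + d) := fun x y hxy => hg'mono (by linarith)
    exact hm.intervalIntegrable
  have hHmono : Monotone H := by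
    intro t1 t2 h12
    rw [hHrep t1, hHrep t2]
    apply intervalIntegral.integral_mono_on (by norm_num : (0:ℝ) ≤ 1)
      (hint' _) (hint' _)
    intro x _
    exact hg'mono (by linarith)
  have hHlb : ∀ t : ℝ, g' (t - 1) ≤ H t := by
    intro t
    have : (∫ x in (0:ℝ)..1, g' (t - 1)) ≤ ∫ x in (0:ℝ)..1, g' (x + (t - 1)) := by
      apply intervalIntegral.integral_mono_on (by norm_num : (0:ℝ) ≤ 1)
        intervalIntegrable_const (hint' _)
      intro x hx
      exact hg'mono (by linarith [hx.1])
    rw [hHrep t]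
    simpa using this
  have hHub : ∀ t : ℝ, H t ≤ g' t := by
    intro t
    have : (∫ x in (0:ℝ)..1, g' (x + (t - 1))) ≤ ∫ x in (0:ℝ)..1, g' t := by
      apply intervalIntegral.integral_mono_on (by norm_num : (0:ℝ) ≤ 1)
        (hint' _) intervalIntegrable_const
      intro x hx
      exact hg'mono (by linarith [hx.2])
    rw [hHrep t]
    simpa using this
  set ψ : ℝ → ℝ := fun t => c * Real.exp (-(max (t - T) 0)) with hψ
  have hψcont : Continuous ψ := by fun_prop
  have hψpos : ∀ t, 0 < ψ t := fun t => mul_pos hc_pos (Real.exp_pos _)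
  have hψle : ∀ t, ψ t ≤ c := by
    intro t
    have h1 : Real.exp (-(max (t - T) 0)) ≤ 1 := by
      rw [Real.exp_le_one_iff]
      simp [le_max_right]
    calc c * Real.exp (-(max (t - T) 0)) ≤ c * 1 := by
          exact mul_le_mul_of_nonneg_left h1 hc_pos.le
      _ = c := mul_one c
  set h : ℝ → ℝ := fun t => H t - ψ t with hh
  have hhc : ∀ t, c ≤ h t := by
    intro t
    have := h2c (t - 1)
    have := hHlb t
    have := hψle t
    simp only [hh]
    linarith
  have hhpos : ∀ t, 0 < h t := fun t => lt_of_lt_of_le hc_pos (hhc t)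
  have hhcont : Continuous h := hHcont.sub hψcont
  set a' : ℝ → ℝ := fun t => h t * Real.exp (-t) with ha'
  have hkey : ∀ t, a' t * Real.exp t = h t := by
    intro t
    simp only [ha', mul_assoc, ← Real.exp_add]
    simp
  have ha'cont : Continuous a' := hhcont.mul (Real.continuous_exp.comp continuous_neg)
  refine ⟨a', T, ha'cont.measurable, fun t => mul_pos (hhpos t) (Real.exp_pos _), ?_, ?_, ?_, ?_⟩
  · -- a' t ≤ a t for t > T
    intro t ht
    have hKt : K ≤ t := by simp only [hT] at ht; simp only [hK]; linarith
    have h1 : h t ≤ g' t := le_trans (by have := hψpos t; simp only [hh]; linarith) (hHub t)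
    have h2 : g' t = a t * Real.exp t := by rw [hg']; simp [max_eq_left hKt]
    have h3 : a' t ≤ a t * Real.exp t * Real.exp (-t) := by
      apply mul_le_mul_of_nonneg_right _ (Real.exp_pos _).le
      rw [← h2]; exact h1
    calc a' t ≤ a t * Real.exp t * Real.exp (-t) := h3
      _ = a t := by rw [mul_assoc, ← Real.exp_add]; simp
  · -- strict mono
    intro x hx y hy hxy
    simp only
    rw [hkey x, hkey y]
    have h1 : H x ≤ H y := hHmono hxy.le
    have hx' : max (x - T) 0 = x - T := max_eq_left (by simp only [Set.mem_Ioi] at hx; linarith)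
    have hy' : max (y - T) 0 = y - T := max_eq_left (by simp only [Set.mem_Ioi] at hy; linarith)
    have h2 : ψ y < ψ x := by
      simp only [hψ, hx', hy']
      exact mul_lt_mul_of_pos_left (Real.exp_lt_exp.2 (by linarith)) hc_pos
    simp only [hh]
    linarith
  · -- continuity
    have : (fun t => a' t * Real.exp t) = h := funext hkey
    rw [this]
    exact hhcont.continuousOn
  · -- divergence
    intro N
    set M : ℝ := max N (T + 1) with hM
    set C : ENNReal := ENNReal.ofReal (Real.exp (-1) / 2) with hC
    have hCpos : C ≠ 0 := by
      simp only [hC, ne_eq, ENNReal.ofReal_eq_zero, not_le]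
      positivity
    have hbound : ∀ t ∈ Set.Ioi M, C * ENNReal.ofReal (a (t - 1)) ≤ ENNReal.ofReal (a' t) := by
      intro t ht
      simp only [Set.mem_Ioi, hM] at ht
      have htT : T + 1 < t := lt_of_le_of_lt (le_max_right N (T+1)) ht
      have hKt : K ≤ t - 1 := by simp only [hK, hT] at *; linarith
      have hg't : g' (t - 1) = a (t - 1) * Real.exp (t - 1) := by
        rw [hg']; simp [max_eq_left hKt]
      have h2c' := h2c (t - 1)
      have h1 : a (t - 1) * Real.exp (t - 1) / 2 * Real.exp (-t) ≤ a' t := by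
        have hha : g' (t - 1) - c ≤ h t := by
          have := hHlb t
          have := hψle t
          simp only [hh]; linarith
        have h3 : g' (t - 1) / 2 ≤ h t :=
          le_trans (by linarith : g' (t - 1) / 2 ≤ g' (t - 1) - c) hha
        calc a (t - 1) * Real.exp (t - 1) / 2 * Real.exp (-t)
            = g' (t-1) / 2 * Real.exp (-t) := by rw [hg't]
          _ ≤ h t * Real.exp (-t) := mul_le_mul_of_nonneg_right h3 (Real.exp_pos _).le
      have h2 : a (t - 1) * Real.exp (t - 1) / 2 * Real.exp (-t)
          = Real.exp (-1) / 2 * a (t - 1) := by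
        have he : Real.exp (t - 1) * Real.exp (-t) = Real.exp (-1) := by
          rw [← Real.exp_add]; ring_nf
        rw [← he]; ring
      rw [h2] at h1
      calc C * ENNReal.ofReal (a (t - 1))
          = ENNReal.ofReal (Real.exp (-1) / 2 * a (t - 1)) := by
            rw [ENNReal.ofReal_mul (by positivity)]
        _ ≤ ENNReal.ofReal (a' t) := ENNReal.ofReal_le_ofReal h1
    have htrans : ∫⁻ t in Set.Ioi M, ENNReal.ofReal (a (t - 1)) =
        ∫⁻ s in Set.Ioi (M - 1), ENNReal.ofReal (a s) := by
      have hmp : MeasurePreserving (fun t : ℝ => t - 1)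
          MeasureTheory.volume MeasureTheory.volume :=
        measurePreserving_sub_right MeasureTheory.volume 1
      have hemb : MeasurableEmbedding (fun t : ℝ => t - 1) :=
        (MeasurableEquiv.subRight (1:ℝ)).measurableEmbedding
      have := hmp.setLIntegral_comp_preimage_emb hemb
        (fun s => ENNReal.ofReal (a s)) (Set.Ioi (M - 1))
      have hpre : (fun t : ℝ => t - 1) ⁻¹' Set.Ioi (M - 1) = Set.Ioi M := by
        ext x
        simp [sub_lt_sub_iff_right]
      rwa [hpre] at this
    rw [eq_top_iff]
    have hmeas : Measurable fun t : ℝ => ENNReal.ofReal (a (t - 1)) :=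
      (ha_meas.comp (measurable_id.sub measurable_const)).ennreal_ofReal
    calc (⊤ : ENNReal) = C * ⊤ := (ENNReal.mul_top hCpos).symm
      _ = C * ∫⁻ s in Set.Ioi (M - 1), ENNReal.ofReal (a s) := by rw [ha_int (M - 1)]
      _ = C * ∫⁻ t in Set.Ioi M, ENNReal.ofReal (a (t - 1)) := by rw [htrans]
      _ = ∫⁻ t in Set.Ioi M, C * ENNReal.ofReal (a (t - 1)) := by
            rw [lintegral_const_mul C hmeas]
      _ ≤ ∫⁻ t in Set.Ioi M, ENNReal.ofReal (a' t) := by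
            apply setLIntegral_mono' measurableSet_Ioi hbound
      _ ≤ ∫⁻ t in Set.Ioi N, ENNReal.ofReal (a' t) := by
            apply lintegral_mono_set
            exact Set.Ioi_subset_Ioi (le_max_left N (T+1))
end

section
/- Let T be an integer and (bₙ)_{n ≥ T} positive reals with bₙ < e·b_{n+1} for all n ≥ T. Define ã(t) = (bₙ/e²)·(b_{n+1}/bₙ)^{t-n} for t ∈ [n, n+1), n ≥ T, and ã(t) = 1 for t < T. Then: (1) t ↦ ã(t)eᵗ is strictly increasing and continuous on (T, ∞); (2) for every integer N ≥ T, ∫_N^∞ ã(t) dt ≥ Σ_{n ≥ N} bₙ/e³; in particular if Σ bₙ = ∞ then ã is not integrable near +∞. -/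
open MeasureTheory Set Real

theorem stmt4 (T : ℤ) (b : ℤ → ℝ)
    (hb_pos : ∀ n : ℤ, T ≤ n → 0 < b n)
    (hb : ∀ n : ℤ, T ≤ n → b n < Real.exp 1 * b (n + 1))
    (a' : ℝ → ℝ)
    (ha'_def : ∀ n : ℤ, T ≤ n → ∀ t : ℝ, t ∈ Set.Ico (n : ℝ) ((n : ℝ) + 1) →
      a' t = (b n / Real.exp 2) * (b (n + 1) / b n) ^ (t - (n : ℝ)))
    (ha'_one : ∀ t : ℝ, t < (T : ℝ) → a' t = 1) :
    StrictMonoOn (fun t => a' t * Real.exp t) (Set.Ioi (T : ℝ)) ∧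
    ContinuousOn (fun t => a' t * Real.exp t) (Set.Ioi (T : ℝ)) ∧
    (∀ N : ℤ, T ≤ N →
      ∑' k : ℕ, ENNReal.ofReal (b (N + k) / Real.exp 3) ≤
        ∫⁻ t in Set.Ioi (N : ℝ), ENNReal.ofReal (a' t)) ∧
    ((∑' k : ℕ, ENNReal.ofReal (b (T + k)) = ⊤) →
      ∀ N : ℝ, ∫⁻ t in Set.Ioi N, ENNReal.ofReal (a' t) = ⊤) := by
  set f : ℝ → ℝ := fun t => a' t * Real.exp t with hf
  set L : ℤ → ℝ := fun n => Real.log (b (n + 1) / b n) with hL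
  set g : ℤ → ℝ → ℝ := fun n t => (b n / Real.exp 2) * Real.exp ((t - n) * L n + t) with hg
  -- positivity of ratio and L n > -1
  have hr_pos : ∀ n : ℤ, T ≤ n → 0 < b (n + 1) / b n := fun n hn =>
    div_pos (hb_pos _ (by omega)) (hb_pos _ hn)
  have hL_gt : ∀ n : ℤ, T ≤ n → -1 < L n := by
    intro n hn
    have h1 : Real.exp (-1) < b (n + 1) / b n := by
      rw [Real.exp_neg, lt_div_iff₀ (hb_pos n hn), inv_mul_eq_div, div_lt_iff₀ (Real.exp_pos 1)]
      linarith [hb n hn, mul_comm (b (n + 1)) (Real.exp 1)]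
    calc -1 = Real.log (Real.exp (-1)) := (Real.log_exp _).symm
    _ < L n := Real.log_lt_log (Real.exp_pos _) h1
  -- a' on Ico pieces in terms of exp
  have hpiece : ∀ n : ℤ, T ≤ n → ∀ t : ℝ, t ∈ Set.Ico (n : ℝ) ((n : ℝ) + 1) →
      a' t = (b n / Real.exp 2) * Real.exp ((t - n) * L n) := by
    intro n hn t ht
    rw [ha'_def n hn t ht, Real.rpow_def_of_pos (hr_pos n hn)]
    simp only [hL]
    rw [mul_comm (Real.log (b (n + 1) / b n)) (t - (n : ℝ)), mul_comm]
  -- key: f = g n on Icc n (n+1)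
  have hkey : ∀ n : ℤ, T ≤ n → ∀ t ∈ Set.Icc (n : ℝ) ((n : ℝ) + 1), f t = g n t := by
    intro n hn t ht
    rcases lt_or_eq_of_le ht.2 with h | h
    · simp only [hf, hg]
      rw [hpiece n hn t ⟨ht.1, h⟩, Real.exp_add]
      ring
    · -- t = n + 1
      have hn1 : T ≤ n + 1 := by omega
      have ht1 : t ∈ Set.Ico ((n + 1 : ℤ) : ℝ) (((n + 1 : ℤ) : ℝ) + 1) := by
        push_cast; constructor <;> [linarith; linarith]
      simp only [hf, hg]
      rw [hpiece (n + 1) hn1 t ht1]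
      have : t - ((n + 1 : ℤ) : ℝ) = 0 := by push_cast; linarith
      rw [this, zero_mul, Real.exp_zero, mul_one]
      have hLn : Real.exp ((t - n) * L n) = b (n + 1) / b n := by
        have : t - (n : ℝ) = 1 := by push_cast at h ⊢; linarith
        rw [this, one_mul, hL, Real.exp_log (hr_pos n hn)]
      rw [Real.exp_add, hLn]
      have hbn := (hb_pos n hn).ne'
      field_simp
  -- strict monotonicity of g n
  have hg_mono : ∀ n : ℤ, T ≤ n → StrictMono (g n) := by
    intro n hn
    intro s t hst
    simp only [hg]
    have hC : 0 < b n / Real.exp 2 := div_pos (hb_pos n hn) (Real.exp_pos 2)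
    apply mul_lt_mul_of_pos_left _ hC
    apply Real.exp_lt_exp.mpr
    have := hL_gt n hn
    nlinarith
  have hg_cont : ∀ n : ℤ, Continuous (g n) := by
    intro n
    exact continuous_const.mul (Real.continuous_exp.comp (by fun_prop))
  -- floor facts
  have hfloorT : ∀ s : ℝ, (T : ℝ) ≤ s → T ≤ ⌊s⌋ := fun s hs => Int.le_floor.mpr hs
  -- strict mono via induction over pieces
  have hstep : ∀ k : ℕ, ∀ s t : ℝ, (T : ℝ) ≤ s → s < t → t ≤ (⌊s⌋ : ℝ) + 1 + k → f s < f t := by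
    intro k
    induction k with
    | zero =>
      intro s t hs hst ht
      have hT := hfloorT s hs
      have h1 : s ∈ Set.Icc ((⌊s⌋ : ℝ)) ((⌊s⌋ : ℝ) + 1) :=
        ⟨Int.floor_le s, by linarith [Int.lt_floor_add_one s]⟩
      have h2 : t ∈ Set.Icc ((⌊s⌋ : ℝ)) ((⌊s⌋ : ℝ) + 1) :=
        ⟨by linarith [Int.floor_le s], by simpa using ht⟩
      rw [hkey _ hT s h1, hkey _ hT t h2]
      exact hg_mono _ hT hst
    | succ k ih =>
      intro s t hs hst ht
      rcases le_or_gt t ((⌊s⌋ : ℝ) + 1) with h | h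
      · have hT := hfloorT s hs
        have h1 : s ∈ Set.Icc ((⌊s⌋ : ℝ)) ((⌊s⌋ : ℝ) + 1) :=
          ⟨Int.floor_le s, by linarith [Int.lt_floor_add_one s]⟩
        have h2 : t ∈ Set.Icc ((⌊s⌋ : ℝ)) ((⌊s⌋ : ℝ) + 1) :=
          ⟨by linarith [Int.floor_le s], h⟩
        rw [hkey _ hT s h1, hkey _ hT t h2]
        exact hg_mono _ hT hst
      · set u : ℝ := (⌊s⌋ : ℝ) + 1 with hu
        have hT := hfloorT s hs
        have hsu : f s < f u := by
          have h1 : s ∈ Set.Icc ((⌊s⌋ : ℝ)) ((⌊s⌋ : ℝ) + 1) :=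
            ⟨Int.floor_le s, by linarith [Int.lt_floor_add_one s]⟩
          have h2 : u ∈ Set.Icc ((⌊s⌋ : ℝ)) ((⌊s⌋ : ℝ) + 1) := ⟨by linarith, le_refl _⟩
          rw [hkey _ hT s h1, hkey _ hT u h2]
          exact hg_mono _ hT (Int.lt_floor_add_one s)
        have huT : (T : ℝ) ≤ u := by
          have : (T : ℝ) ≤ (⌊s⌋ : ℝ) := by exact_mod_cast hT
          linarith
        have hfu : ⌊u⌋ = ⌊s⌋ + 1 := by
          rw [hu]
          rw [show ((⌊s⌋ : ℝ) + 1) = ((⌊s⌋ + 1 : ℤ) : ℝ) by push_cast; ring, Int.floor_intCast]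
        have := ih u t huT h (by rw [hfu]; push_cast; push_cast at ht; linarith)
        linarith
  have part1 : StrictMonoOn f (Set.Ioi (T : ℝ)) := by
    intro s hs t ht hst
    have hs' : (T : ℝ) ≤ s := le_of_lt hs
    have hk : t ≤ (⌊s⌋ : ℝ) + 1 + ((⌊t⌋ - ⌊s⌋).toNat : ℕ) := by
      have h1 : ⌊s⌋ ≤ ⌊t⌋ := Int.floor_le_floor hst.le
      have hc : (((⌊t⌋ - ⌊s⌋).toNat : ℕ) : ℝ) = (⌊t⌋ : ℝ) - (⌊s⌋ : ℝ) := by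
        have := Int.toNat_of_nonneg (by omega : (0:ℤ) ≤ ⌊t⌋ - ⌊s⌋)
        exact_mod_cast congrArg (fun z : ℤ => (z : ℝ)) this
      have h2 : t < (⌊t⌋ : ℝ) + 1 := Int.lt_floor_add_one t
      rw [hc]
      linarith
    exact hstep _ s t hs' hst hk
  -- continuity
  have part2 : ContinuousOn f (Set.Ioi (T : ℝ)) := by
    intro x hx
    apply ContinuousAt.continuousWithinAt
    rcases eq_or_ne ((⌊x⌋ : ℝ)) x with hint | hint
    · -- x is an integer, x = ⌊x⌋, and x > T so ⌊x⌋ ≥ T + 1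
      set n : ℤ := ⌊x⌋ with hn
      have hnT : T + 1 ≤ n := by
        have : (T : ℝ) < (n : ℝ) := by rw [hint]; exact hx
        exact_mod_cast this
      have hle : ContinuousWithinAt f (Set.Iic x) x := by
        have hcg : ContinuousWithinAt (g (n - 1)) (Set.Iic x) x := (hg_cont _).continuousWithinAt
        apply hcg.congr_of_eventuallyEq
        · have hmem : Set.Icc (((n : ℝ)) - 1) x ∈ nhdsWithin x (Set.Iic x) := by
            apply mem_nhdsWithin.mpr
            refine ⟨Set.Ioi (((n : ℝ)) - 1), isOpen_Ioi, by rw [← hint]; simp, ?_⟩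
            rintro y ⟨hy1, hy2⟩
            exact ⟨le_of_lt hy1, hy2⟩
          filter_upwards [hmem] with y hy
          have : y ∈ Set.Icc (((n - 1 : ℤ)) : ℝ) (((n - 1 : ℤ) : ℝ) + 1) := by
            push_cast
            refine ⟨by linarith [hy.1], ?_⟩
            rw [← hint] at hy
            push_cast at hy
            linarith [hy.2]
          exact hkey (n - 1) (by omega) y this
        · have : x ∈ Set.Icc (((n - 1 : ℤ)) : ℝ) (((n - 1 : ℤ) : ℝ) + 1) := by
            push_cast; rw [← hint]; constructor <;> simp
          exact hkey (n - 1) (by omega) x this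
      have hge : ContinuousWithinAt f (Set.Ici x) x := by
        have hcg : ContinuousWithinAt (g n) (Set.Ici x) x := (hg_cont _).continuousWithinAt
        apply hcg.congr_of_eventuallyEq
        · have hmem : Set.Icc x (((n : ℝ)) + 1) ∈ nhdsWithin x (Set.Ici x) := by
            apply mem_nhdsWithin.mpr
            refine ⟨Set.Iio (((n : ℝ)) + 1), isOpen_Iio, by rw [← hint]; simp, ?_⟩
            rintro y ⟨hy1, hy2⟩
            exact ⟨hy2, le_of_lt hy1⟩
          filter_upwards [hmem] with y hy
          have : y ∈ Set.Icc ((n : ℝ)) (((n : ℝ)) + 1) := ⟨by rw [hint]; exact hy.1, hy.2⟩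
          exact hkey n (by omega) y this
        · have : x ∈ Set.Icc ((n : ℝ)) (((n : ℝ)) + 1) := ⟨le_of_eq hint, by rw [← hint]; linarith⟩
          exact hkey n (by omega) x this
      have := hle.union hge
      rwa [Set.Iic_union_Ici, continuousWithinAt_univ] at this
    · -- x not an integer
      set n : ℤ := ⌊x⌋ with hn
      have hnT : T ≤ n := hfloorT x (le_of_lt hx)
      have hlt : (n : ℝ) < x := lt_of_le_of_ne (Int.floor_le x) hint
      have hmem : Set.Ioo ((n : ℝ)) ((n : ℝ) + 1) ∈ nhds x :=
        Ioo_mem_nhds hlt (Int.lt_floor_add_one x)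
      have heq : f =ᶠ[nhds x] g n := by
        filter_upwards [hmem] with y hy
        exact hkey n hnT y ⟨le_of_lt hy.1, le_of_lt hy.2⟩
      exact ContinuousAt.congr ((hg_cont n).continuousAt) heq.symm
  -- pointwise lower bound on pieces
  have hlow : ∀ n : ℤ, T ≤ n → ∀ t ∈ Set.Ioo ((n : ℝ)) ((n : ℝ) + 1),
      b n / Real.exp 3 ≤ a' t := by
    intro n hn t ht
    rw [hpiece n hn t ⟨le_of_lt ht.1, ht.2⟩]
    have hs1 : 0 ≤ t - (n : ℝ) := by linarith [ht.1]
    have hs2 : t - (n : ℝ) ≤ 1 := by linarith [ht.2]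
    have hLn := hL_gt n hn
    have hexp : Real.exp (-1) ≤ Real.exp ((t - n) * L n) := by
      apply Real.exp_le_exp.mpr
      nlinarith [mul_nonneg hs1 (by linarith : (0:ℝ) ≤ L n + 1)]
    have hC : 0 < b n / Real.exp 2 := div_pos (hb_pos n hn) (Real.exp_pos 2)
    calc b n / Real.exp 3 = (b n / Real.exp 2) * Real.exp (-1) := by
          rw [Real.exp_neg]
          rw [show (3:ℝ) = 2 + 1 by norm_num, Real.exp_add]
          field_simp
    _ ≤ (b n / Real.exp 2) * Real.exp ((t - n) * L n) :=
        mul_le_mul_of_nonneg_left hexp (le_of_lt hC)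
  -- integral lower bound for each piece
  have hI : ∀ n : ℤ, T ≤ n → ENNReal.ofReal (b n / Real.exp 3) ≤
      ∫⁻ t in Set.Ioo ((n : ℝ)) ((n : ℝ) + 1), ENNReal.ofReal (a' t) := by
    intro n hn
    have h1 : ENNReal.ofReal (b n / Real.exp 3) =
        ∫⁻ _ in Set.Ioo ((n : ℝ)) ((n : ℝ) + 1), ENNReal.ofReal (b n / Real.exp 3) := by
      rw [setLIntegral_const, Real.volume_Ioo]
      simp
    rw [h1]
    apply setLIntegral_mono' measurableSet_Ioo
    intro t ht
    exact ENNReal.ofReal_le_ofReal (hlow n hn t ht)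
  -- part 3
  have part3 : ∀ N : ℤ, T ≤ N →
      ∑' k : ℕ, ENNReal.ofReal (b (N + k) / Real.exp 3) ≤
        ∫⁻ t in Set.Ioi (N : ℝ), ENNReal.ofReal (a' t) := by
    intro N hN
    have hsub : (⋃ k : ℕ, Set.Ioo (((N + k : ℤ)) : ℝ) (((N + k : ℤ)) + 1)) ⊆ Set.Ioi ((N : ℝ)) := by
      rintro x ⟨s, ⟨k, rfl⟩, hx⟩
      simp only [Set.mem_Ioo] at hx
      have : ((N : ℝ)) ≤ ((N + k : ℤ) : ℝ) := by push_cast; linarith [Nat.cast_nonneg (α := ℝ) k]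
      exact lt_of_le_of_lt this hx.1
    calc ∑' k : ℕ, ENNReal.ofReal (b (N + k) / Real.exp 3)
        ≤ ∑' k : ℕ, ∫⁻ t in Set.Ioo (((N + k : ℤ)) : ℝ) (((N + k : ℤ)) + 1),
            ENNReal.ofReal (a' t) := ENNReal.tsum_le_tsum (fun k => hI (N + k) (by omega))
    _ = ∫⁻ t in ⋃ k : ℕ, Set.Ioo (((N + k : ℤ)) : ℝ) (((N + k : ℤ)) + 1),
            ENNReal.ofReal (a' t) := by
        rw [lintegral_iUnion (fun k => measurableSet_Ioo)]
        intro i j hij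
        apply Set.disjoint_left.mpr
        rintro x ⟨hx1, hx2⟩ ⟨hy1, hy2⟩
        push_cast at hx1 hx2 hy1 hy2
        rcases lt_or_gt_of_ne hij with h | h
        · have : (i : ℝ) + 1 ≤ j := by exact_mod_cast h
          linarith
        · have : (j : ℝ) + 1 ≤ i := by exact_mod_cast h
          linarith
    _ ≤ ∫⁻ t in Set.Ioi ((N : ℝ)), ENNReal.ofReal (a' t) := lintegral_mono_set hsub
  refine ⟨part1, part2, part3, ?_⟩
  -- part 4
  intro htop N
  set M : ℤ := max T (⌈N⌉ + 1) with hM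
  have hMT : T ≤ M := le_max_left _ _
  have hMN : (N : ℝ) < (M : ℝ) := by
    have h1 : (⌈N⌉ : ℝ) + 1 ≤ (M : ℝ) := by exact_mod_cast le_max_right T (⌈N⌉ + 1)
    linarith [Int.le_ceil N]
  -- tail sum is top
  have htail : ∑' k : ℕ, ENNReal.ofReal (b (M + k)) = ⊤ := by
    set d : ℕ := (M - T).toNat with hd
    have hdM : M = T + d := by
      have : ((M - T).toNat : ℤ) = M - T := Int.toNat_of_nonneg (by omega)
      omega
    have hsplit : ∀ (g : ℕ → ENNReal) (e : ℕ),
        ∑' k : ℕ, g k ≤ (∑ i ∈ Finset.range e, g i) + ∑' k : ℕ, g (k + e) := by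
      intro g e
      rw [ENNReal.tsum_eq_iSup_sum]
      apply iSup_le
      intro s
      obtain ⟨m, hm⟩ := s.exists_nat_subset_range
      calc ∑ i ∈ s, g i ≤ ∑ i ∈ Finset.range (e + m), g i :=
            Finset.sum_le_sum_of_subset (hm.trans (Finset.range_subset_range.mpr (by omega)))
      _ = (∑ i ∈ Finset.range e, g i) + ∑ i ∈ Finset.range m, g (e + i) :=
            Finset.sum_range_add g e m
      _ ≤ (∑ i ∈ Finset.range e, g i) + ∑' k : ℕ, g (k + e) := by
            refine add_le_add le_rfl ?_
            have : ∀ i, g (e + i) = g (i + e) := fun i => by rw [add_comm]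
            simp_rw [this]
            exact ENNReal.sum_le_tsum (Finset.range m)
    have this := le_antisymm le_top
      (htop ▸ hsplit (fun k : ℕ => ENNReal.ofReal (b (T + k))) d : (⊤:ENNReal) ≤ _)
    have hfin : ∑ i ∈ Finset.range d, ENNReal.ofReal (b (T + i)) ≠ ⊤ :=
      (ENNReal.sum_lt_top.mpr (fun i _ => ENNReal.ofReal_lt_top)).ne
    have htail' : ∑' k : ℕ, ENNReal.ofReal (b (T + (k + d))) = ⊤ := by
      by_contra h
      exact (ENNReal.add_lt_top.mpr ⟨hfin.lt_top, lt_top_iff_ne_top.mpr h⟩).ne this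
    rw [← htail']
    congr 1
    ext k
    congr 2
    omega
  have hscale : ∑' k : ℕ, ENNReal.ofReal (b (M + k) / Real.exp 3) = ⊤ := by
    have heq : ∀ k : ℕ, ENNReal.ofReal (b (M + k) / Real.exp 3) =
        ENNReal.ofReal (b (M + k)) * ENNReal.ofReal (Real.exp 3)⁻¹ := by
      intro k
      rw [div_eq_mul_inv, ENNReal.ofReal_mul' (by positivity)]
    simp_rw [heq]
    rw [ENNReal.tsum_mul_right, htail, ENNReal.top_mul]
    simp [ENNReal.ofReal_eq_zero, not_le, inv_pos, Real.exp_pos]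
  have := le_trans (le_of_eq hscale.symm) (part3 M hMT)
  have hIM : ∫⁻ t in Set.Ioi ((M : ℝ)), ENNReal.ofReal (a' t) = ⊤ := by
    have h := part3 M hMT
    rw [hscale] at h
    exact top_le_iff.mp h
  have hmono : ∫⁻ t in Set.Ioi ((M : ℝ)), ENNReal.ofReal (a' t) ≤
      ∫⁻ t in Set.Ioi N, ENNReal.ofReal (a' t) :=
    lintegral_mono_set (fun x hx => lt_trans hMN hx)
  rw [hIM] at hmono
  exact top_le_iff.mp hmono
end

section
/- Let (X, μ) be a measure space, ψ : X → ℝ a measurable function, and C > 0. Suppose that for every B ∈ (0, 1], liminf_{R→+∞} e^R · (1/B) · μ({x : -R - B < ψ(x) < -R}) ≥ C/(2e^B). Then liminf_{R→+∞} e^R · μ({x : ψ(x) < -R}) ≥ C/2. -/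
open MeasureTheory Set Real Filter

private lemma my_le_liminf_add {α : Type*} {f : Filter α} {u v : α → ENNReal} :
    Filter.liminf u f + Filter.liminf v f ≤ Filter.liminf (fun x => u x + v x) f := by
  rcases f.eq_or_neBot with rfl | _
  · simp [Filter.liminf_bot]
  rcases eq_or_ne (Filter.liminf u f) 0 with h0 | h0
  · rw [h0, zero_add]
    exact Filter.liminf_le_liminf (Filter.Eventually.of_forall fun x => le_add_self)
  rcases eq_or_ne (Filter.liminf v f) 0 with h1 | h1
  · rw [h1, add_zero]
    exact Filter.liminf_le_liminf (Filter.Eventually.of_forall fun x => le_self_add)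
  refine (le_liminf_iff (by isBoundedDefault) (by isBoundedDefault)).2 fun c hc => ?_
  obtain ⟨a', ha', b', hb', hc'⟩ := ENNReal.exists_lt_add_of_lt_add hc h0 h1
  filter_upwards [Filter.eventually_lt_of_lt_liminf ha',
    Filter.eventually_lt_of_lt_liminf hb'] with x h2 h3
  exact hc'.trans (ENNReal.add_lt_add h2 h3)

private lemma my_liminf_shift (f : ℝ → ENNReal) (a : ℝ) :
    Filter.liminf (fun R => f (R + a)) Filter.atTop = Filter.liminf f Filter.atTop := by
  have h1 : Filter.map (fun R : ℝ => R + a) Filter.atTop = Filter.atTop :=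
    Filter.map_atTop_eq_of_gc (fun b => b - a) 0
      (fun x y hxy => by simpa using add_le_add_right hxy a)
      (fun x cc _ => by constructor <;> intro <;> linarith)
      (fun cc _ => by linarith)
  have h2 : Filter.map (fun R : ℝ => f (R + a)) Filter.atTop = Filter.map f Filter.atTop := by
    conv_rhs => rw [← h1, Filter.map_map]
    rfl
  unfold Filter.liminf
  rw [h2]

theorem stmt5 {X : Type*} [MeasurableSpace X] (μ : Measure X)
    (ψ : X → ℝ) (hψ : Measurable ψ) (C : ℝ) (hC : 0 < C)
    (h : ∀ B : ℝ, B ∈ Set.Ioc (0 : ℝ) 1 →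
      ENNReal.ofReal (C / (2 * Real.exp B)) ≤
        Filter.liminf (fun R : ℝ =>
          ENNReal.ofReal (Real.exp R / B) * μ {x | -R - B < ψ x ∧ ψ x < -R}) Filter.atTop) :
    ENNReal.ofReal (C / 2) ≤
      Filter.liminf (fun R : ℝ =>
        ENNReal.ofReal (Real.exp R) * μ {x | ψ x < -R}) Filter.atTop := by
  set L := Filter.liminf (fun R : ℝ =>
      ENNReal.ofReal (Real.exp R) * μ {x | ψ x < -R}) Filter.atTop with hL
  have key : ∀ B : ℝ, B ∈ Set.Ioc (0 : ℝ) 1 →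
      ENNReal.ofReal (B * (1 - Real.exp (-B))⁻¹ * (C / (2 * Real.exp B))) ≤ L := by
    intro B hB
    obtain ⟨hB0, hB1⟩ := hB
    set f : ℝ → ENNReal := fun R =>
      ENNReal.ofReal (Real.exp R / B) * μ {x | -R - B < ψ x ∧ ψ x < -R} with hf
    set c : ℕ → ENNReal := fun k => ENNReal.ofReal (B * Real.exp (-((k : ℝ) * B))) with hc'
    -- pointwise slab estimate
    have step1 : ∀ N : ℕ, ∀ R : ℝ,
        ∑ k ∈ Finset.range N, c k * f (R + (k : ℝ) * B)
          ≤ ENNReal.ofReal (Real.exp R) * μ {x | ψ x < -R} := by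
      intro N R
      have hmeas : ∀ k : ℕ, MeasurableSet
          {x | -(R + (k : ℝ) * B) - B < ψ x ∧ ψ x < -(R + (k : ℝ) * B)} := by
        intro k
        exact hψ (measurableSet_Ioo (a := -(R + (k : ℝ) * B) - B) (b := -(R + (k : ℝ) * B)))
      have hdisj : (↑(Finset.range N) : Set ℕ).PairwiseDisjoint
          (fun k : ℕ => {x | -(R + (k : ℝ) * B) - B < ψ x ∧ ψ x < -(R + (k : ℝ) * B)}) := by
        have key2 : ∀ i j : ℕ, i < j → Disjoint
            {x | -(R + (i : ℝ) * B) - B < ψ x ∧ ψ x < -(R + (i : ℝ) * B)}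
            {x | -(R + (j : ℝ) * B) - B < ψ x ∧ ψ x < -(R + (j : ℝ) * B)} := by
          intro i j hij
          refine Set.disjoint_left.2 fun x hxi hxj => ?_
          have h1 : ((i : ℝ) + 1) ≤ (j : ℝ) := by exact_mod_cast hij
          have h2 : ((i : ℝ) + 1) * B ≤ (j : ℝ) * B :=
            mul_le_mul_of_nonneg_right h1 hB0.le
          have := hxi.1
          have := hxj.2
          simp only [Set.mem_setOf_eq] at hxi hxj
          linarith [hxi.1, hxj.2]
        intro i _ j _ hij
        rcases lt_or_gt_of_ne hij with hlt | hgt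
        · exact key2 i j hlt
        · exact (key2 j i hgt).symm
      have hsub : ∀ k ∈ Finset.range N,
          {x | -(R + (k : ℝ) * B) - B < ψ x ∧ ψ x < -(R + (k : ℝ) * B)} ⊆ {x | ψ x < -R} := by
        intro k _ x hx
        have h1 : (0 : ℝ) ≤ (k : ℝ) * B := mul_nonneg (Nat.cast_nonneg k) hB0.le
        simp only [Set.mem_setOf_eq] at hx ⊢
        linarith [hx.2]
      calc ∑ k ∈ Finset.range N, c k * f (R + (k : ℝ) * B)
          = ∑ k ∈ Finset.range N, ENNReal.ofReal (Real.exp R) *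
              μ {x | -(R + (k : ℝ) * B) - B < ψ x ∧ ψ x < -(R + (k : ℝ) * B)} := by
            refine Finset.sum_congr rfl fun k _ => ?_
            simp only [hf, hc']
            rw [← mul_assoc, ← ENNReal.ofReal_mul
              (mul_nonneg hB0.le (Real.exp_nonneg _))]
            congr 2
            have hBne : B ≠ 0 := hB0.ne'
            have harg : -((k : ℝ) * B) + (R + (k : ℝ) * B) = R := by ring
            field_simp
            rw [← Real.exp_add]; congr 1
            ring
        _ = ENNReal.ofReal (Real.exp R) *
              μ (⋃ k ∈ Finset.range N,
                {x | -(R + (k : ℝ) * B) - B < ψ x ∧ ψ x < -(R + (k : ℝ) * B)}) := by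
            rw [← Finset.mul_sum, measure_biUnion_finset hdisj (fun k _ => hmeas k)]
        _ ≤ ENNReal.ofReal (Real.exp R) * μ {x | ψ x < -R} :=
            mul_le_mul_right (measure_mono (Set.iUnion₂_subset hsub)) _
    -- liminf superadditivity over the finite sum
    set Lf := Filter.liminf f Filter.atTop with hLf
    have step2 : ∀ N : ℕ,
        (∑ k ∈ Finset.range N, c k) * Lf ≤
          Filter.liminf (fun R => ∑ k ∈ Finset.range N, c k * f (R + (k : ℝ) * B))
            Filter.atTop := by
      intro N
      induction N with
      | zero => simp
      | succ N ih =>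
        have hterm : c N * Lf ≤
            Filter.liminf (fun R => c N * f (R + (N : ℝ) * B)) Filter.atTop := by
          have h1 : Filter.liminf (fun R => f (R + (N : ℝ) * B)) Filter.atTop = Lf :=
            my_liminf_shift f ((N : ℝ) * B)
          calc c N * Lf
              = Filter.liminf (fun _ : ℝ => c N) Filter.atTop *
                Filter.liminf (fun R => f (R + (N : ℝ) * B)) Filter.atTop := by
                rw [h1, Filter.liminf_const]
            _ ≤ Filter.liminf
                  ((fun _ : ℝ => c N) * fun R => f (R + (N : ℝ) * B)) Filter.atTop :=
                ENNReal.le_liminf_mul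
            _ = Filter.liminf (fun R => c N * f (R + (N : ℝ) * B)) Filter.atTop := rfl
        calc (∑ k ∈ Finset.range (N + 1), c k) * Lf
            = (∑ k ∈ Finset.range N, c k) * Lf + c N * Lf := by
              rw [Finset.sum_range_succ, add_mul]
          _ ≤ Filter.liminf (fun R => ∑ k ∈ Finset.range N, c k * f (R + (k : ℝ) * B))
                Filter.atTop +
              Filter.liminf (fun R => c N * f (R + (N : ℝ) * B)) Filter.atTop :=
              add_le_add ih hterm
          _ ≤ Filter.liminf (fun R =>
                (∑ k ∈ Finset.range N, c k * f (R + (k : ℝ) * B)) +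
                  c N * f (R + (N : ℝ) * B)) Filter.atTop := my_le_liminf_add
          _ = Filter.liminf (fun R => ∑ k ∈ Finset.range (N + 1), c k * f (R + (k : ℝ) * B))
                Filter.atTop := by
              simp only [Finset.sum_range_succ]
    have step3 : ∀ N : ℕ, (∑ k ∈ Finset.range N, c k) * Lf ≤ L := by
      intro N
      refine (step2 N).trans ?_
      exact Filter.liminf_le_liminf (Filter.Eventually.of_forall (step1 N))
    have step4 : (∑' k : ℕ, c k) * Lf ≤ L := by
      rw [ENNReal.tsum_eq_iSup_nat, ENNReal.iSup_mul]
      exact iSup_le step3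
    -- compute the geometric series
    have hexp1 : Real.exp (-B) < 1 := by
      rw [← Real.exp_zero]
      exact Real.exp_lt_exp.2 (by linarith)
    have hsum : (∑' k : ℕ, c k) =
        ENNReal.ofReal B * ENNReal.ofReal ((1 - Real.exp (-B))⁻¹) := by
      have h1 : ∀ k : ℕ, c k = ENNReal.ofReal B * ENNReal.ofReal (Real.exp (-B)) ^ k := by
        intro k
        have h3 : -((k : ℝ) * B) = (k : ℝ) * -B := by ring
        have h2 : B * Real.exp (-((k : ℝ) * B)) = B * Real.exp (-B) ^ k := by
          rw [h3, Real.exp_nat_mul]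
        simp only [hc']
        rw [h2, ENNReal.ofReal_mul hB0.le, ENNReal.ofReal_pow (Real.exp_nonneg _)]
      simp only [h1]
      rw [ENNReal.tsum_mul_left, ENNReal.tsum_geometric]
      congr 1
      rw [ENNReal.ofReal_inv_of_pos (by linarith)]
      congr 1
      rw [ENNReal.ofReal_sub _ (Real.exp_nonneg _), ENNReal.ofReal_one]
    have hLfB : ENNReal.ofReal (C / (2 * Real.exp B)) ≤ Lf := h B ⟨hB0, hB1⟩
    calc ENNReal.ofReal (B * (1 - Real.exp (-B))⁻¹ * (C / (2 * Real.exp B)))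
        = ENNReal.ofReal B * ENNReal.ofReal ((1 - Real.exp (-B))⁻¹) *
            ENNReal.ofReal (C / (2 * Real.exp B)) := by
          rw [ENNReal.ofReal_mul (mul_nonneg hB0.le (inv_nonneg.2 (by linarith))),
            ENNReal.ofReal_mul hB0.le]
      _ ≤ (∑' k : ℕ, c k) * Lf := by
          rw [hsum]
          exact mul_le_mul_right hLfB _
      _ ≤ L := step4
  -- now let B → 0 along the sequence 1/(n+1)
  have hslope : Filter.Tendsto (fun B : ℝ => (Real.exp B - 1) / B)
      (nhdsWithin 0 {x | x ≠ 0}) (nhds 1) := by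
    have h1 := Real.hasDerivAt_exp 0
    rw [hasDerivAt_iff_tendsto_slope] at h1
    simp only [Real.exp_zero] at h1
    have h2 : ∀ B : ℝ, slope Real.exp 0 B = (Real.exp B - 1) / B := by
      intro B
      simp [slope_def_field, Real.exp_zero]
    refine h1.congr fun B => ?_
    rw [h2]
  have hv : Filter.Tendsto (fun B : ℝ => B * (1 - Real.exp (-B))⁻¹ * (C / (2 * Real.exp B)))
      (nhdsWithin 0 {x | x ≠ 0}) (nhds (C / 2)) := by
    have h2 : Filter.Tendsto (fun B : ℝ => C / 2 * ((Real.exp B - 1) / B)⁻¹)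
        (nhdsWithin 0 {x | x ≠ 0}) (nhds (C / 2)) := by
      have h3 := hslope.inv₀ one_ne_zero
      have h4 := Filter.Tendsto.mul (tendsto_const_nhds (x := C / 2)) h3
      simpa using h4
    refine h2.congr' ?_
    filter_upwards [self_mem_nhdsWithin] with B hB
    have hBne : B ≠ 0 := hB
    have hexpB : Real.exp B ≠ 0 := (Real.exp_pos B).ne'
    have hexpne : Real.exp B - 1 ≠ 0 := by
      intro hcon
      apply hBne
      have : Real.exp B = 1 := by linarith
      exact (Real.exp_eq_one_iff _).1 this
    have hkey : 1 - Real.exp (-B) = (Real.exp B - 1) / Real.exp B := by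
      rw [Real.exp_neg]
      field_simp
    rw [hkey]
    field_simp
  have hu : Filter.Tendsto (fun n : ℕ => 1 / ((n : ℝ) + 1))
      Filter.atTop (nhdsWithin 0 {x | x ≠ 0}) := by
    refine tendsto_nhdsWithin_of_tendsto_nhds_of_eventually_within _
      tendsto_one_div_add_atTop_nhds_zero_nat ?_
    refine Filter.Eventually.of_forall fun n => ?_
    have : (0 : ℝ) < 1 / ((n : ℝ) + 1) := by positivity
    exact this.ne'
  have hmem : ∀ n : ℕ, (1 / ((n : ℝ) + 1)) ∈ Set.Ioc (0 : ℝ) 1 := by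
    intro n
    constructor
    · positivity
    · rw [div_le_one (by positivity)]
      have := Nat.cast_nonneg (α := ℝ) n
      linarith
  have hfinal : Filter.Tendsto (fun n : ℕ => ENNReal.ofReal
      ((1 / ((n : ℝ) + 1)) * (1 - Real.exp (-(1 / ((n : ℝ) + 1))))⁻¹ *
        (C / (2 * Real.exp (1 / ((n : ℝ) + 1))))))
      Filter.atTop (nhds (ENNReal.ofReal (C / 2))) :=
    (ENNReal.continuous_ofReal.tendsto _).comp (hv.comp hu)
  exact le_of_tendsto hfinal (Filter.Eventually.of_forall fun n =>
    key (1 / ((n : ℝ) + 1)) (hmem n))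
end

section
/- Let (X, μ) be a measure space, g : X → [0,∞] measurable, C > 0, and ã : ℝ → (0,∞) such that t ↦ ã(t)eᵗ is strictly increasing and continuous on (T, ∞) for some T, ã(-log r)·r⁻¹ → +∞ as r → 0⁺, and ∫_N^∞ ã(t) dt = +∞ for every N. Suppose there is r₁ ∈ (0,1) such that μ({x : g(x) ≥ ã(-log r)·r⁻¹}) ≥ C·r for all r ∈ (0, r₁]. Then ∫_X g dμ = +∞. -/
open MeasureTheory Set Real Filter

theorem stmt10 {X : Type*} [MeasurableSpace X] (μ : Measure X)
    (g : X → ENNReal) (hg : Measurable g) (C : ℝ) (hC : 0 < C)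
    (a' : ℝ → ℝ) (ha'_pos : ∀ t, 0 < a' t) (T : ℝ)
    (ha'_mono : StrictMonoOn (fun t => a' t * Real.exp t) (Set.Ioi T))
    (ha'_cont : ContinuousOn (fun t => a' t * Real.exp t) (Set.Ioi T))
    (ha'_tendsto : Filter.Tendsto (fun r : ℝ => a' (-Real.log r) / r)
      (nhdsWithin 0 (Set.Ioi 0)) Filter.atTop)
    (ha'_div : ∀ N : ℝ, ∫⁻ t in Set.Ioi N, ENNReal.ofReal (a' t) = ⊤)
    (r₁ : ℝ) (hr₁ : r₁ ∈ Set.Ioo (0 : ℝ) 1)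
    (h : ∀ r : ℝ, r ∈ Set.Ioc 0 r₁ →
      ENNReal.ofReal (C * r) ≤ μ {x | ENNReal.ofReal (a' (-Real.log r) / r) ≤ g x}) :
    ∫⁻ x, g x ∂μ = ⊤ := by
  classical
  have hlog2 : (0:ℝ) < Real.log 2 := Real.log_pos one_lt_two
  set t₀ : ℝ := max (T + 1) (1 - Real.log r₁) with ht₀
  set tn : ℕ → ℝ := fun n => t₀ + n * Real.log 2 with htn
  have ht₀le : ∀ n, t₀ ≤ tn n := by
    intro n
    have hn : (0:ℝ) ≤ (n:ℝ) * Real.log 2 := by positivity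
    simp only [htn]; linarith
  have htT : ∀ n, tn n ∈ Set.Ioi T := by
    intro n
    have h1 : T + 1 ≤ t₀ := le_max_left _ _
    have := ht₀le n
    simp only [Set.mem_Ioi]; linarith
  have htmono : Monotone tn := by
    intro a b hab
    have : (a:ℝ) ≤ (b:ℝ) := by exact_mod_cast hab
    simp only [htn]
    nlinarith
  set rn : ℕ → ℝ := fun n => Real.exp (-(tn n)) with hrn
  have hrn_mem : ∀ n, rn n ∈ Set.Ioc (0:ℝ) r₁ := by
    intro n
    refine ⟨Real.exp_pos _, ?_⟩
    have h1 : 1 - Real.log r₁ ≤ tn n := le_trans (le_max_right _ _) (ht₀le n)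
    have h2 : Real.exp (-(tn n)) ≤ Real.exp (Real.log r₁) :=
      Real.exp_le_exp.2 (by linarith)
    rwa [Real.exp_log hr₁.1] at h2
  set lam : ℕ → ℝ := fun n => a' (tn n) * Real.exp (tn n) with hlam
  set u : ℕ → ℝ := fun n => a' (tn n) with hu
  have hu_nonneg : ∀ n, 0 ≤ u n := fun n => (ha'_pos _).le
  have hlam_nonneg : ∀ n, 0 ≤ lam n := fun n => by
    have := ha'_pos (tn n); have := Real.exp_pos (tn n); positivity
  have hlam_mono : ∀ {a b : ℕ}, a ≤ b → lam a ≤ lam b := by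
    intro a b hab
    exact ha'_mono.monotoneOn (htT a) (htT b) (htmono hab)
  -- basic exponential computations
  have hstep : ∀ n, tn (n+1) = tn n + Real.log 2 := by
    intro n; simp only [htn]; push_cast; ring
  set b : ℕ → ℝ := fun n => (lam (n+1) - lam n) * rn (n+1) with hb
  have hb_nonneg : ∀ n, 0 ≤ b n := fun n =>
    mul_nonneg (by linarith [hlam_mono (Nat.le_succ n)]) (Real.exp_pos _).le
  have hb_eq : ∀ n, b n = u (n+1) - u n / 2 := by
    intro n
    have h1 : Real.exp (tn (n+1)) * Real.exp (-(tn (n+1))) = 1 := by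
      rw [← Real.exp_add]; simp
    have h2 : Real.exp (tn n) * Real.exp (-(tn (n+1))) = 1/2 := by
      rw [← Real.exp_add]
      have : tn n + -(tn (n+1)) = -Real.log 2 := by rw [hstep]; ring
      rw [this, Real.exp_neg, Real.exp_log (by norm_num : (0:ℝ) < 2)]
      norm_num
    simp only [hb, hlam, hu, hrn]
    linear_combination a' (tn (n+1)) * h1 - a' (tn n) * h2
  -- Abel identity
  have hAbel : ∀ N, 2 * ∑ n ∈ Finset.range N, b n
      = (∑ n ∈ Finset.range N, u (n+1)) + u N - u 0 := by
    intro N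
    induction N with
    | zero => simp
    | succ N ih =>
      rw [Finset.sum_range_succ, Finset.sum_range_succ]
      have := hb_eq N
      linarith
  -- divergence of ∑ u (n+1)
  have hcover : Set.Ioi t₀ ⊆ ⋃ n, Set.Ioc (tn n) (tn (n+1)) := by
    intro s hs
    have hs' : t₀ < s := hs
    have hex : ∃ n, s ≤ tn n := by
      obtain ⟨n, hn⟩ := exists_nat_gt ((s - t₀) / Real.log 2)
      refine ⟨n, ?_⟩
      have : (s - t₀) / Real.log 2 ≤ (n:ℝ) := hn.le
      have : s - t₀ ≤ (n:ℝ) * Real.log 2 := by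
        rw [div_le_iff₀ hlog2] at this; linarith
      simp only [htn]; linarith
    set m := Nat.find hex with hm
    have hm1 : s ≤ tn m := Nat.find_spec hex
    have hm0 : m ≠ 0 := by
      intro h0
      have : s ≤ tn 0 := h0 ▸ hm1
      simp only [htn] at this
      push_cast at this
      linarith
    obtain ⟨k, hk⟩ := Nat.exists_eq_succ_of_ne_zero hm0
    refine Set.mem_iUnion.2 ⟨k, ?_, ?_⟩
    · by_contra hcon
      push_neg at hcon
      exact Nat.find_min hex (by omega : k < m) hcon
    · rw [← Nat.succ_eq_add_one, ← hk]; exact hm1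
  have hseg : ∀ n, ∫⁻ s in Set.Ioc (tn n) (tn (n+1)), ENNReal.ofReal (a' s)
      ≤ ENNReal.ofReal (2 * u (n+1)) * ENNReal.ofReal (Real.log 2) := by
    intro n
    have hbound : ∀ s ∈ Set.Ioc (tn n) (tn (n+1)), ENNReal.ofReal (a' s)
        ≤ ENNReal.ofReal (2 * u (n+1)) := by
      intro s hs
      apply ENNReal.ofReal_le_ofReal
      have hsT : s ∈ Set.Ioi T := by
        have := (htT n); have := hs.1; simp only [Set.mem_Ioi] at *; linarith
      have hmon : a' s * Real.exp s ≤ a' (tn (n+1)) * Real.exp (tn (n+1)) :=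
        ha'_mono.monotoneOn hsT (htT (n+1)) hs.2
      have hle : Real.exp (tn (n+1)) ≤ 2 * Real.exp s := by
        have h' : Real.exp (tn (n+1)) = 2 * Real.exp (tn n) := by
          rw [hstep, Real.exp_add, Real.exp_log (by norm_num : (0:ℝ) < 2)]
          ring
        have h'' : Real.exp (tn n) ≤ Real.exp s := Real.exp_le_exp.2 hs.1.le
        rw [h']; linarith
      have hes := Real.exp_pos s
      have hup := ha'_pos (tn (n+1))
      simp only [hu]
      nlinarith
    calc ∫⁻ s in Set.Ioc (tn n) (tn (n+1)), ENNReal.ofReal (a' s)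
        ≤ ∫⁻ _ in Set.Ioc (tn n) (tn (n+1)), ENNReal.ofReal (2 * u (n+1)) :=
          setLIntegral_mono measurable_const hbound
      _ = ENNReal.ofReal (2 * u (n+1)) * volume (Set.Ioc (tn n) (tn (n+1))) :=
          setLIntegral_const _ _
      _ = ENNReal.ofReal (2 * u (n+1)) * ENNReal.ofReal (Real.log 2) := by
          rw [Real.volume_Ioc, hstep]; ring_nf
  have hu_div : ∑' n, ENNReal.ofReal (u (n+1)) = ⊤ := by
    by_contra hfin
    have h1 : (⊤ : ENNReal) ≤ ∑' n, ENNReal.ofReal (2 * u (n+1)) * ENNReal.ofReal (Real.log 2) := by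
      calc (⊤ : ENNReal) = ∫⁻ s in Set.Ioi t₀, ENNReal.ofReal (a' s) := (ha'_div t₀).symm
        _ ≤ ∫⁻ s in ⋃ n, Set.Ioc (tn n) (tn (n+1)), ENNReal.ofReal (a' s) :=
            lintegral_mono_set hcover
        _ ≤ ∑' n, ∫⁻ s in Set.Ioc (tn n) (tn (n+1)), ENNReal.ofReal (a' s) :=
            lintegral_iUnion_le _ _
        _ ≤ _ := ENNReal.tsum_le_tsum hseg
    have h2 : ∀ n, ENNReal.ofReal (2 * u (n+1)) * ENNReal.ofReal (Real.log 2)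
        = (ENNReal.ofReal 2 * ENNReal.ofReal (Real.log 2)) * ENNReal.ofReal (u (n+1)) := by
      intro n
      rw [ENNReal.ofReal_mul (by norm_num : (0:ℝ) ≤ 2)]
      ring
    rw [tsum_congr h2, ENNReal.tsum_mul_left] at h1
    have h3 : (ENNReal.ofReal 2 * ENNReal.ofReal (Real.log 2)) * (∑' n, ENNReal.ofReal (u (n+1))) ≠ ⊤ :=
      ENNReal.mul_ne_top (ENNReal.mul_ne_top ENNReal.ofReal_ne_top ENNReal.ofReal_ne_top) hfin
    exact h3 (top_le_iff.1 h1)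
  -- divergence of ∑ b
  have hb_div : ∑' n, ENNReal.ofReal (b n) = ⊤ := by
    by_contra hfin
    have hpart : ∀ N, ∑ n ∈ Finset.range N, ENNReal.ofReal (u (n+1))
        ≤ 2 * (∑' n, ENNReal.ofReal (b n)) + ENNReal.ofReal (u 0) := by
      intro N
      have hreal : ∑ n ∈ Finset.range N, u (n+1) ≤ 2 * ∑ n ∈ Finset.range N, b n + u 0 := by
        have := hAbel N; have := hu_nonneg N; linarith
      calc ∑ n ∈ Finset.range N, ENNReal.ofReal (u (n+1))
          = ENNReal.ofReal (∑ n ∈ Finset.range N, u (n+1)) :=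
            (ENNReal.ofReal_sum_of_nonneg (fun i _ => hu_nonneg _)).symm
        _ ≤ ENNReal.ofReal (2 * ∑ n ∈ Finset.range N, b n + u 0) :=
            ENNReal.ofReal_le_ofReal hreal
        _ ≤ ENNReal.ofReal (2 * ∑ n ∈ Finset.range N, b n) + ENNReal.ofReal (u 0) :=
            ENNReal.ofReal_add_le
        _ = ENNReal.ofReal 2 * ENNReal.ofReal (∑ n ∈ Finset.range N, b n) + ENNReal.ofReal (u 0) := by
            rw [ENNReal.ofReal_mul (by norm_num : (0:ℝ) ≤ 2)]
        _ = 2 * (∑ n ∈ Finset.range N, ENNReal.ofReal (b n)) + ENNReal.ofReal (u 0) := by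
            rw [ENNReal.ofReal_sum_of_nonneg (fun i _ => hb_nonneg _)]
            norm_num
        _ ≤ 2 * (∑' n, ENNReal.ofReal (b n)) + ENNReal.ofReal (u 0) := by
            gcongr
            exact ENNReal.sum_le_tsum _
    have hts : ∑' n, ENNReal.ofReal (u (n+1)) ≤ 2 * (∑' n, ENNReal.ofReal (b n)) + ENNReal.ofReal (u 0) := by
      rw [ENNReal.tsum_eq_iSup_nat]
      exact iSup_le hpart
    rw [hu_div] at hts
    exact (ENNReal.add_ne_top.2 ⟨ENNReal.mul_ne_top (by norm_num) hfin, ENNReal.ofReal_ne_top⟩)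
      (top_le_iff.1 hts)
  -- the layer functions
  set A : ℕ → Set X := fun n => {x | ENNReal.ofReal (lam (n+1)) ≤ g x} with hA
  have hA_meas : ∀ n, MeasurableSet (A n) := by
    intro n
    exact hg measurableSet_Ici
  set F : ℕ → X → ENNReal :=
    fun n => (A n).indicator (fun _ => ENNReal.ofReal (lam (n+1) - lam n)) with hF
  -- pointwise bound
  have hpoint : ∀ x, ∑' n, F n x ≤ g x := by
    intro x
    have key : ∀ N, ∑ n ∈ Finset.range N, F n x
        ≤ min (g x) (ENNReal.ofReal (lam N - lam 0)) := by
      intro N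
      induction N with
      | zero => simp
      | succ N ih =>
        rw [Finset.sum_range_succ]
        by_cases hx : x ∈ A N
        · have hgx : ENNReal.ofReal (lam (N+1)) ≤ g x := hx
          have hFx : F N x = ENNReal.ofReal (lam (N+1) - lam N) := by
            simp [hF, Set.indicator_of_mem hx]
          rw [hFx]
          have h1 : ∑ n ∈ Finset.range N, F n x ≤ ENNReal.ofReal (lam N - lam 0) :=
            ih.trans (min_le_right _ _)
          have h2 : ∑ n ∈ Finset.range N, F n x + ENNReal.ofReal (lam (N+1) - lam N)
              ≤ ENNReal.ofReal (lam (N+1) - lam 0) := by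
            calc ∑ n ∈ Finset.range N, F n x + ENNReal.ofReal (lam (N+1) - lam N)
                ≤ ENNReal.ofReal (lam N - lam 0) + ENNReal.ofReal (lam (N+1) - lam N) := by
                  gcongr
              _ = ENNReal.ofReal (lam (N+1) - lam 0) := by
                  rw [← ENNReal.ofReal_add (by linarith [hlam_mono (Nat.zero_le N)])
                    (by linarith [hlam_mono (Nat.le_succ N)])]
                  ring_nf
          refine le_min ?_ h2
          refine h2.trans (le_trans (ENNReal.ofReal_le_ofReal ?_) hgx)
          linarith [hlam_nonneg 0]
        · have hFx : F N x = 0 := by simp [hF, Set.indicator_of_notMem hx]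
          rw [hFx, add_zero]
          refine ih.trans (min_le_min le_rfl (ENNReal.ofReal_le_ofReal ?_))
          linarith [hlam_mono (Nat.le_succ N)]
    rw [ENNReal.tsum_eq_iSup_nat]
    exact iSup_le fun N => (key N).trans (min_le_left _ _)
  -- measure lower bound for each layer
  have hmu : ∀ n, ENNReal.ofReal (C * rn (n+1)) ≤ μ (A n) := by
    intro n
    have := h (rn (n+1)) (hrn_mem (n+1))
    have heq : a' (-Real.log (rn (n+1))) / rn (n+1) = lam (n+1) := by
      have h1 : Real.log (rn (n+1)) = -(tn (n+1)) := by simp [hrn]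
      have h2 : rn (n+1) = (Real.exp (tn (n+1)))⁻¹ := by simp [hrn, Real.exp_neg]
      rw [h1, neg_neg, h2, div_eq_mul_inv, inv_inv]
    rwa [heq] at this
  -- putting it together
  have hmain : ∑' n, ENNReal.ofReal C * ENNReal.ofReal (b n) ≤ ∫⁻ x, g x ∂μ := by
    calc ∑' n, ENNReal.ofReal C * ENNReal.ofReal (b n)
        ≤ ∑' n, ∫⁻ x, F n x ∂μ := by
          apply ENNReal.tsum_le_tsum
          intro n
          rw [hF, lintegral_indicator_const (hA_meas n)]
          calc ENNReal.ofReal C * ENNReal.ofReal (b n)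
              = ENNReal.ofReal (lam (n+1) - lam n) * ENNReal.ofReal (C * rn (n+1)) := by
                rw [← ENNReal.ofReal_mul hC.le, ← ENNReal.ofReal_mul
                  (by linarith [hlam_mono (Nat.le_succ n)])]
                congr 1
                simp only [hb]; ring
            _ ≤ ENNReal.ofReal (lam (n+1) - lam n) * μ (A n) := by
                gcongr
                exact hmu n
      _ = ∫⁻ x, ∑' n, F n x ∂μ := by
          rw [lintegral_tsum]
          intro n
          exact ((measurable_const.indicator (hA_meas n))).aemeasurable
      _ ≤ ∫⁻ x, g x ∂μ := lintegral_mono hpoint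
  rw [ENNReal.tsum_mul_left, hb_div, ENNReal.mul_top] at hmain
  · exact top_le_iff.1 hmain
  · simp [ENNReal.ofReal_eq_zero, not_le, hC]
end
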